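/- For every ε > 0, Duchi et al.'s one-dimensional mechanism satisfies ε-local differential privacy: for all inputs t, t′ ∈ [−1,1] and each output value x ∈ {−B, B}, the probability of outputting x on input t is at most e^ε times the probability of outputting x on input t′. -/

import Mathlib

open Real

/-- output magnitude `B` of Duchi et al.'s one-dimensional mechanism. -/
noncomputable def duchiB (ε : ℝ) : ℝ := (exp ε + 1) / (exp ε - 1)

/-- output probability mass function of Duchi et al.'s one-dimensional mechanism:
it outputs `B` with probability `((e^ε−1)/(2e^ε+2))·t + 1/2` and `−B` with probability
`−((e^ε−1)/(2e^ε+2))·t + 1/2`. -/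
noncomputable def duchiProb (ε t x : ℝ) : ℝ :=
  if x = duchiB ε then (exp ε - 1) / (2 * exp ε + 2) * t + 1 / 2
  else if x = -duchiB ε then -((exp ε - 1) / (2 * exp ε + 2)) * t + 1 / 2
  else 0

/-! The probability of each output is affine and nondecreasing in `±t`, so the worst ratio is
between the inputs `1` and `-1`, where it is exactly `e^ε`: this is the choice of slope
`(e^ε-1)/(2e^ε+2)`. -/

lemma affine_le_mul_affine {E t t' : ℝ} (hE : 1 ≤ E) (ht : t ≤ 1) (ht' : -1 ≤ t') :
    (E - 1) / (2 * E + 2) * t + 1 / 2 ≤ E * ((E - 1) / (2 * E + 2) * t' + 1 / 2) := by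
  have hslope : 0 ≤ (E - 1) / (2 * E + 2) := div_nonneg (by linarith) (by linarith)
  have hextreme : (E - 1) / (2 * E + 2) * 1 + 1 / 2 =
      E * ((E - 1) / (2 * E + 2) * (-1) + 1 / 2) := by
    field_simp
    ring
  calc (E - 1) / (2 * E + 2) * t + 1 / 2 ≤ (E - 1) / (2 * E + 2) * 1 + 1 / 2 := by gcongr
    _ = E * ((E - 1) / (2 * E + 2) * (-1) + 1 / 2) := hextreme
    _ ≤ E * ((E - 1) / (2 * E + 2) * t' + 1 / 2) := by gcongr

lemma duchiB_pos {ε : ℝ} (hε : 0 < ε) : 0 < duchiB ε :=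
  div_pos (by linarith [add_one_le_exp ε]) (by linarith [add_one_lt_exp hε.ne'])

lemma duchiProb_duchiB (ε t : ℝ) :
    duchiProb ε t (duchiB ε) = (exp ε - 1) / (2 * exp ε + 2) * t + 1 / 2 :=
  if_pos rfl

lemma duchiProb_neg_duchiB {ε : ℝ} (hε : 0 < ε) (t : ℝ) :
    duchiProb ε t (-duchiB ε) = (exp ε - 1) / (2 * exp ε + 2) * (-t) + 1 / 2 := by
  have hne : -duchiB ε ≠ duchiB ε := by linarith [duchiB_pos hε]
  rw [duchiProb, if_neg hne, if_pos rfl]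
  ring

/-- Duchi et al.'s one-dimensional mechanism satisfies ε-local differential privacy. -/
theorem stmt_7 (ε : ℝ) (hε : 0 < ε) (t t' : ℝ)
    (ht : t ∈ Set.Icc (-1 : ℝ) 1) (ht' : t' ∈ Set.Icc (-1 : ℝ) 1)
    (x : ℝ) (hx : x ∈ ({-duchiB ε, duchiB ε} : Set ℝ)) :
    duchiProb ε t x ≤ exp ε * duchiProb ε t' x := by
  have hE : 1 ≤ exp ε := one_le_exp hε.le
  rcases hx with rfl | rfl
  · rw [duchiProb_neg_duchiB hε, duchiProb_neg_duchiB hε]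
    exact affine_le_mul_affine hE (by linarith [ht.1]) (by linarith [ht'.2])
  · rw [duchiProb_duchiB, duchiProb_duchiB]
    exact affine_le_mul_affine hE ht.2 ht'.1
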